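/- arXiv:1103.4098 — 4 statements merged into one kernel-verified Lean document; each statement's English description precedes it below -/
import Mathlib

section
/- Let A be a real symmetric n×n matrix, M a metric space, and h : ℝⁿ × M → ℝⁿ continuous and componentwise in x. Assume (A2): there is a > 0 with (hₖ(z₁,v) - hₖ(z₂,v))(z₁ - z₂) ≥ a|z₁ - z₂|² for all k, z₁, z₂ ∈ ℝ, v ∈ M. Assume also h(0,u) ≠ 0 for all u ∈ M. Then for every fixed u ∈ M and every λ > ‖A‖/a, the system A x = λ h(x,u) has a unique solution x ∈ ℝⁿ, and this solution is nontrivial (x ≠ 0). -/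
/-!
Each component `z ↦ hₖ(z, u)` is continuous and strongly monotone with constant `a`, hence a
bijection of `ℝ` that expands distances by at least `a`. So `H := h(·, u)` is a bijection of
`ℝⁿ` whose inverse is `a⁻¹`-Lipschitz, and `A x = λ H x` is the fixed-point equation
`x = H⁻¹ (λ⁻¹ A x)` of a map with Lipschitz constant `‖A‖ / (a λ) < 1`; Banach's fixed-point
theorem gives existence and uniqueness. The solution is nonzero because `A 0 = 0 ≠ λ h(0, u)`.
-/

open scoped NNReal
open Filter Function

def StronglyMonotoneWith (a : ℝ≥0) (f : ℝ → ℝ) : Prop :=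
  ∀ z₁ z₂, (a : ℝ) * |z₁ - z₂| ^ 2 ≤ (f z₁ - f z₂) * (z₁ - z₂)

namespace StronglyMonotoneWith

variable {f : ℝ → ℝ} {a : ℝ≥0}

theorem mul_sub_le_sub (hf : StronglyMonotoneWith a f) {z₁ z₂ : ℝ} (h : z₂ ≤ z₁) :
    a * (z₁ - z₂) ≤ f z₁ - f z₂ := by
  rcases h.eq_or_lt with rfl | hlt
  · simp
  · have := hf z₁ z₂
    rw [sq_abs, sq] at this
    nlinarith [sub_pos.2 hlt]

theorem antilipschitzWith (hf : StronglyMonotoneWith a f) (ha : 0 < a) :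
    AntilipschitzWith a⁻¹ f := by
  refine AntilipschitzWith.of_le_mul_dist fun z₁ z₂ => ?_
  wlog h : z₂ ≤ z₁ generalizing z₁ z₂
  · simpa only [dist_comm] using this z₂ z₁ (le_of_not_ge h)
  have hmono := hf.mul_sub_le_sub h
  rw [Real.dist_eq, Real.dist_eq, abs_of_nonneg (sub_nonneg.2 h),
    abs_of_nonneg ((mul_nonneg a.2 (sub_nonneg.2 h)).trans hmono), NNReal.coe_inv,
    le_inv_mul_iff₀ (by exact_mod_cast ha)]
  exact hmono

theorem surjective (hf : StronglyMonotoneWith a f) (ha : 0 < a) (hc : Continuous f) :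
    Surjective f := by
  have ha' : (0 : ℝ) < a := ha
  refine hc.surjective ?_ ?_
  · refine tendsto_atTop_mono' _ ?_
      (tendsto_atTop_add_const_left _ (f 0) (tendsto_id.const_mul_atTop ha'))
    filter_upwards [eventually_ge_atTop 0] with z hz
    have := hf.mul_sub_le_sub hz
    simp only [sub_zero, id] at this ⊢
    linarith
  · refine tendsto_atBot_mono' _ ?_
      (tendsto_atBot_add_const_left _ (f 0) (tendsto_id.const_mul_atBot ha'))
    filter_upwards [eventually_le_atBot 0] with z hz
    have := hf.mul_sub_le_sub hz
    simp only [zero_sub, mul_neg, id] at this ⊢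
    linarith

end StronglyMonotoneWith

theorem AntilipschitzWith.piLp_two {ι : Type*} [Fintype ι] {α β : ι → Type*}
    [∀ i, SeminormedAddCommGroup (α i)] [∀ i, SeminormedAddCommGroup (β i)]
    {K : ℝ≥0} {f : ∀ i, α i → β i} (hf : ∀ i, AntilipschitzWith K (f i)) :
    AntilipschitzWith K fun x : PiLp 2 α => WithLp.toLp 2 fun i => f i (x i) := by
  refine AntilipschitzWith.of_le_mul_dist fun x y => ?_
  rw [← pow_le_pow_iff_left₀ dist_nonneg (by positivity) two_ne_zero, mul_pow,
    PiLp.dist_sq_eq_of_L2, PiLp.dist_sq_eq_of_L2, Finset.mul_sum]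
  refine Finset.sum_le_sum fun i _ => ?_
  rw [← mul_pow]
  exact pow_le_pow_left₀ dist_nonneg ((hf i).le_mul_dist _ _) 2

theorem ContractingWith.existsUnique_apply_eq {α β : Type*} [MetricSpace α] [CompleteSpace α]
    [Nonempty α] {K : ℝ≥0} (e : α ≃ β) {F : α → β} (hF : ContractingWith K (e.symm ∘ F)) :
    ∃! x, F x = e x :=
  ⟨fixedPoint _ hF, e.symm_apply_eq.1 hF.fixedPoint_isFixedPt,
    fun _ hy => hF.fixedPoint_unique (e.symm_apply_eq.2 hy)⟩

theorem stmt2_general (n : ℕ) (M : Type*) [MetricSpace M]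
    (A : Matrix (Fin n) (Fin n) ℝ)
    (hs : Fin n → ℝ → M → ℝ)
    (hcont : ∀ k, Continuous fun p : ℝ × M => hs k p.1 p.2)
    (h : EuclideanSpace ℝ (Fin n) → M → EuclideanSpace ℝ (Fin n))
    (hdef : ∀ x u k, h x u k = hs k (x k) u)
    (a : ℝ) (ha : 0 < a)
    (hmono : ∀ (k : Fin n) (z₁ z₂ : ℝ) (v : M),
      a * |z₁ - z₂| ^ 2 ≤ (hs k z₁ v - hs k z₂ v) * (z₁ - z₂))
    (h0 : ∀ u : M, h 0 u ≠ 0)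
    (u : M) (lam : ℝ) (hlam : ‖Matrix.toEuclideanCLM (𝕜 := ℝ) A‖ / a < lam) :
    (∃! x : EuclideanSpace ℝ (Fin n),
        Matrix.toEuclideanCLM (𝕜 := ℝ) A x = lam • h x u)
    ∧ ∀ x : EuclideanSpace ℝ (Fin n),
        Matrix.toEuclideanCLM (𝕜 := ℝ) A x = lam • h x u → x ≠ 0 := by
  set B := Matrix.toEuclideanCLM (𝕜 := ℝ) A
  have hlam0 : 0 < lam := (div_nonneg (norm_nonneg _) ha.le).trans_lt hlam
  lift a to ℝ≥0 using ha.le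
  have ha' : 0 < a := by exact_mod_cast ha
  have hmono' k : StronglyMonotoneWith a (hs k · u) := fun z₁ z₂ => hmono k z₁ z₂ u
  let e : EuclideanSpace ℝ (Fin n) ≃ EuclideanSpace ℝ (Fin n) :=
    WithLp.congr 2 <| Equiv.piCongrRight fun k => Equiv.ofBijective (hs k · u)
      ⟨((hmono' k).antilipschitzWith ha').injective, (hmono' k).surjective ha' (by fun_prop)⟩
  have he x : e x = h x u := by ext k; exact (hdef x u k).symm
  have hsymm : LipschitzWith a⁻¹ e.symm :=
    (AntilipschitzWith.piLp_two fun k => (hmono' k).antilipschitzWith ha').to_rightInverse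
      e.rightInverse_symm
  have hcontr : ContractingWith (a⁻¹ * ‖lam⁻¹ • B‖₊) (e.symm ∘ ⇑(lam⁻¹ • B)) := by
    refine ⟨?_, hsymm.comp (lam⁻¹ • B).lipschitz⟩
    rw [← NNReal.coe_lt_coe]
    push_cast
    rw [norm_smul, norm_inv, Real.norm_of_nonneg hlam0.le, inv_mul_lt_iff₀ ha, mul_one,
      inv_mul_lt_iff₀ hlam0, ← div_lt_iff₀ ha]
    exact hlam
  have hsol x : B x = lam • h x u ↔ (lam⁻¹ • B) x = e x := by
    rw [he, smul_apply, inv_smul_eq_iff₀ hlam0.ne']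
  refine ⟨by simpa only [hsol] using hcontr.existsUnique_apply_eq e, ?_⟩
  rintro x hx rfl
  exact h0 u (smul_right_injective _ hlam0.ne' (by simpa using hx.symm))

theorem stmt2 (n : ℕ) (M : Type*) [MetricSpace M]
    (A : Matrix (Fin n) (Fin n) ℝ) (hA : A.IsSymm)
    (hs : Fin n → ℝ → M → ℝ)
    (hcont : ∀ k, Continuous fun p : ℝ × M => hs k p.1 p.2)
    (h : EuclideanSpace ℝ (Fin n) → M → EuclideanSpace ℝ (Fin n))
    (hdef : ∀ x u k, h x u k = hs k (x k) u)
    (a : ℝ) (ha : 0 < a)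
    (hmono : ∀ (k : Fin n) (z₁ z₂ : ℝ) (v : M),
      a * |z₁ - z₂| ^ 2 ≤ (hs k z₁ v - hs k z₂ v) * (z₁ - z₂))
    (h0 : ∀ u : M, h 0 u ≠ 0)
    (u : M) (lam : ℝ) (hlam : ‖Matrix.toEuclideanCLM (𝕜 := ℝ) A‖ / a < lam) :
    (∃! x : EuclideanSpace ℝ (Fin n),
        Matrix.toEuclideanCLM (𝕜 := ℝ) A x = lam • h x u)
    ∧ ∀ x : EuclideanSpace ℝ (Fin n),
        Matrix.toEuclideanCLM (𝕜 := ℝ) A x = lam • h x u → x ≠ 0 :=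
  stmt2_general n M A hs hcont h hdef a ha hmono h0 u lam hlam
end

section
/- Let A be a real symmetric n×n matrix, M a metric space, h : ℝⁿ × M → ℝⁿ continuous and componentwise in x. Assume (A1): there exist γ > 2, ζ, θ > 0 with ⟨h(z,v), z⟩ ≥ ζ|z|^γ for |z| ≥ θ and all v ∈ M; and (A2): there is a > 0 with (hₖ(z₁,v) - hₖ(z₂,v))(z₁ - z₂) ≥ a|z₁ - z₂|² for all k, z₁, z₂, v; and h(0,u) ≠ 0 for all u. Fix λ > ‖A‖/a. Let uₖ → ū in M and let xₖ be the (unique, nontrivial) solutions of A xₖ = λ h(xₖ, uₖ). Then the sequence (xₖ) has a convergent subsequence, and its limit x̄ satisfies A x̄ = λ h(x̄, ū). -/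
open scoped InnerProductSpace
open Filter Topology

theorem stmt4 (n : ℕ) (M : Type*) [MetricSpace M]
    (A : Matrix (Fin n) (Fin n) ℝ) (hA : A.IsSymm)
    (hs : Fin n → ℝ → M → ℝ)
    (hcont : ∀ k, Continuous fun p : ℝ × M => hs k p.1 p.2)
    (h : EuclideanSpace ℝ (Fin n) → M → EuclideanSpace ℝ (Fin n))
    (hdef : ∀ x u k, h x u k = hs k (x k) u)
    (γ ζ θ : ℝ) (hγ : 2 < γ) (hζ : 0 < ζ) (hθ : 0 < θ)
    (hA1 : ∀ (z : EuclideanSpace ℝ (Fin n)) (v : M), θ ≤ ‖z‖ →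
      ζ * ‖z‖ ^ γ ≤ ⟪h z v, z⟫_ℝ)
    (a : ℝ) (ha : 0 < a)
    (hA2 : ∀ (k : Fin n) (z₁ z₂ : ℝ) (v : M),
      a * |z₁ - z₂| ^ 2 ≤ (hs k z₁ v - hs k z₂ v) * (z₁ - z₂))
    (h0 : ∀ u : M, h 0 u ≠ 0)
    (lam : ℝ) (hlam : ‖Matrix.toEuclideanCLM (𝕜 := ℝ) A‖ / a < lam)
    (u : ℕ → M) (ub : M) (hu : Tendsto u atTop (𝓝 ub))
    (x : ℕ → EuclideanSpace ℝ (Fin n))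
    (hx : ∀ k, Matrix.toEuclideanCLM (𝕜 := ℝ) A (x k) = lam • h (x k) (u k)) :
    ∃ (φ : ℕ → ℕ) (xb : EuclideanSpace ℝ (Fin n)), StrictMono φ ∧
      Tendsto (x ∘ φ) atTop (𝓝 xb) ∧
      Matrix.toEuclideanCLM (𝕜 := ℝ) A xb = lam • h xb ub := by
  set T := Matrix.toEuclideanCLM (𝕜 := ℝ) A with hT
  have hlam0 : 0 < lam := lt_of_le_of_lt (div_nonneg (norm_nonneg _) ha.le) hlam
  have hAn : ‖T‖ < lam * a := by rwa [div_lt_iff₀ ha] at hlam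
  have hHcont : Continuous fun p : EuclideanSpace ℝ (Fin n) × M => h p.1 p.2 := by
    have heq : (fun p : EuclideanSpace ℝ (Fin n) × M => h p.1 p.2) =
        fun p => (WithLp.equiv 2 (Fin n → ℝ)).symm (fun k => hs k (p.1 k) p.2) := by
      funext p; ext k; simp [hdef]
    rw [heq]
    refine (PiLp.continuous_toLp 2 _).comp (continuous_pi fun k => ?_)
    have c1 : Continuous fun p : EuclideanSpace ℝ (Fin n) × M => ((p.1 k, p.2) : ℝ × M) :=
      ((continuous_apply k).comp ((PiLp.continuous_ofLp 2 _).comp continuous_fst)).prodMk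
        continuous_snd
    exact (hcont k).comp c1
  set R : ℝ := max θ ((a / ζ) ^ (1 / (γ - 2))) with hR
  have hγ2 : 0 < γ - 2 := by linarith
  have hbound : ∀ k, ‖x k‖ ≤ R := by
    intro k
    by_cases hcase : ‖x k‖ < θ
    · exact le_trans hcase.le (le_max_left _ _)
    push_neg at hcase
    have hx0 : 0 < ‖x k‖ := lt_of_lt_of_le hθ hcase
    have h1 : lam * (ζ * ‖x k‖ ^ γ) ≤ ⟪T (x k), x k⟫_ℝ := by
      rw [hx k, real_inner_smul_left]
      exact mul_le_mul_of_nonneg_left (hA1 _ _ hcase) hlam0.le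
    have h2 : ⟪T (x k), x k⟫_ℝ ≤ ‖T‖ * ‖x k‖ ^ 2 := by
      calc ⟪T (x k), x k⟫_ℝ ≤ ‖T (x k)‖ * ‖x k‖ := real_inner_le_norm _ _
        _ ≤ ‖T‖ * ‖x k‖ * ‖x k‖ :=
            mul_le_mul_of_nonneg_right (T.le_opNorm _) (norm_nonneg _)
        _ = ‖T‖ * ‖x k‖ ^ 2 := by ring
    have h3 : ζ * ‖x k‖ ^ γ ≤ a * ‖x k‖ ^ 2 := by
      nlinarith [sq_nonneg (‖x k‖)]
    have h4 : ‖x k‖ ^ (γ - 2) ≤ a / ζ := by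
      have hsplit : ‖x k‖ ^ γ = ‖x k‖ ^ (2 : ℝ) * ‖x k‖ ^ (γ - 2) := by
        rw [← Real.rpow_add hx0]; ring_nf
      rw [hsplit, Real.rpow_two] at h3
      have hX2 : 0 < ‖x k‖ ^ 2 := pow_pos hx0 2
      rw [le_div_iff₀ hζ]
      nlinarith
    have h5 : ‖x k‖ ≤ (a / ζ) ^ (1 / (γ - 2)) := by
      have : ‖x k‖ = (‖x k‖ ^ (γ - 2)) ^ (1 / (γ - 2)) := by
        rw [one_div, Real.rpow_rpow_inv hx0.le hγ2.ne']
      rw [this]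
      exact Real.rpow_le_rpow (Real.rpow_nonneg hx0.le _) h4 (by positivity)
    exact le_trans h5 (le_max_right _ _)
  obtain ⟨xb, -, φ, hφ, hconv⟩ := (isCompact_closedBall (0 : EuclideanSpace ℝ (Fin n)) R).tendsto_subseq
    (fun k => by simpa [Metric.mem_closedBall, dist_zero_right] using hbound k)
  refine ⟨φ, xb, hφ, hconv, ?_⟩
  have hu' : Tendsto (u ∘ φ) atTop (𝓝 ub) := hu.comp hφ.tendsto_atTop
  have hl1 : Tendsto (fun k => T ((x ∘ φ) k)) atTop (𝓝 (T xb)) :=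
    (T.continuous.tendsto xb).comp hconv
  have hl2 : Tendsto (fun k => lam • h ((x ∘ φ) k) ((u ∘ φ) k)) atTop
      (𝓝 (lam • h xb ub)) :=
    tendsto_const_nhds.smul ((hHcont.tendsto (xb, ub)).comp (hconv.prodMk_nhds hu'))
  have heq2 : (fun k => T ((x ∘ φ) k)) = fun k => lam • h ((x ∘ φ) k) ((u ∘ φ) k) :=
    funext fun k => hx (φ k)
  exact tendsto_nhds_unique (heq2 ▸ hl1) hl2
end

section
/- Let A be a positive definite real symmetric n×n matrix with smallest eigenvalue λ₁ > 0, M a metric space, and h : ℝⁿ × M → ℝⁿ continuous and componentwise in x satisfying (A4): (hₖ(z₁,v)-hₖ(z₂,v))(z₁-z₂) ≤ b|z₁-z₂|² for some b > 0, and h(0,u) ≠ 0 for all u ∈ M. Then for every u ∈ M and every λ ∈ (0, λ₁/b), the system A x = λ h(x,u) has a unique solution, and it is nontrivial. -/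
/-!
Uniqueness: `x ↦ A x - λ h(x,u)` is strongly monotone, since `λ₁ |x-y|²` bounds
`⟪x - y, A (x - y)⟫` from below while (A4) bounds `λ ⟪x - y, h(x,u) - h(y,u)⟫` by `λ b |x - y|²`.

Existence: as `h` acts componentwise it is the gradient of `Φ(x) = ∑ₖ ∫₀^{xₖ} hₖ(t,u) dt`, so the
solutions are the critical points of `F(x) = ½ ⟪x, A x⟫ - λ Φ(x)`. Integrating (A4) from `0` gives
`Φ(x) ≤ ⟪h(0,u), x⟫ + b |x|² / 2`, hence `F(x) ≥ ½ (λ₁ - λ b) |x|² - λ |h(0,u)| |x|` is coercive and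
attains its minimum. Finally `x = 0` would force `h(0,u) = 0`.
-/

open scoped InnerProductSpace
open Filter

theorem LinearMap.IsSymmetric.mul_norm_sq_le_inner {E : Type*} [NormedAddCommGroup E]
    [InnerProductSpace ℝ E] [FiniteDimensional ℝ E] {T : E →ₗ[ℝ] E} (hT : T.IsSymmetric)
    {n : ℕ} (hn : Module.finrank ℝ E = n) {l : ℝ} (hl : ∀ i, l ≤ hT.eigenvalues hn i) (x : E) :
    l * ‖x‖ ^ 2 ≤ ⟪x, T x⟫_ℝ := by
  let B := hT.eigenvectorBasis hn
  have hinner : ⟪x, T x⟫_ℝ = ∑ i, hT.eigenvalues hn i * B.repr x i ^ 2 := by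
    rw [← B.repr.inner_map_map, PiLp.inner_apply]
    refine Finset.sum_congr rfl fun i _ => ?_
    rw [hT.eigenvectorBasis_apply_self_apply hn x i, real_inner_eq_re_inner, RCLike.inner_apply]
    simp only [conj_trivial, RCLike.re_to_real, RCLike.ofReal_real_eq_id, id_eq, B]
    ring
  have hnorm : ‖x‖ ^ 2 = ∑ i, B.repr x i ^ 2 := by
    rw [← B.repr.norm_map, EuclideanSpace.norm_sq_eq]
    simp
  rw [hinner, hnorm, Finset.mul_sum]
  exact Finset.sum_le_sum fun i _ => mul_le_mul_of_nonneg_right (hl i) (sq_nonneg _)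

theorem Matrix.IsHermitian.mul_norm_sq_le_inner {ι : Type*} [Fintype ι] [DecidableEq ι]
    {A : Matrix ι ι ℝ} (hA : A.IsHermitian) {l : ℝ} (hl : ∀ i, l ≤ hA.eigenvalues i)
    (x : EuclideanSpace ℝ ι) : l * ‖x‖ ^ 2 ≤ ⟪x, toEuclideanCLM (𝕜 := ℝ) A x⟫_ℝ := by
  refine (isSymmetric_toEuclideanLin_iff.mpr hA).mul_norm_sq_le_inner finrank_euclideanSpace
    (fun i => ?_) x
  simpa [IsHermitian.eigenvalues, IsHermitian.eigenvalues₀] using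
    hl (Fintype.equivOfCardEq (Fintype.card_fin _) i)

theorem intervalIntegral_le_of_sub_mul_le {g : ℝ → ℝ} (hg : Continuous g) {b : ℝ}
    (hgb : ∀ t, (g t - g 0) * t ≤ b * t ^ 2) (z : ℝ) :
    ∫ t in (0 : ℝ)..z, g t ≤ g 0 * z + b * z ^ 2 / 2 := by
  have hlin : Continuous fun t => g 0 + b * t := by fun_prop
  have hline : ∫ t in (0 : ℝ)..z, (g 0 + b * t) = g 0 * z + b * z ^ 2 / 2 := by
    rw [intervalIntegral.integral_add intervalIntegrable_const
      ((continuous_const_mul b).intervalIntegrable _ _), intervalIntegral.integral_const_mul]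
    simp
    ring
  rw [← hline]
  rcases le_total 0 z with hz | hz
  · refine intervalIntegral.integral_mono_on hz (hg.intervalIntegrable _ _)
      (hlin.intervalIntegrable _ _) fun t ⟨ht, _⟩ => ?_
    rcases ht.eq_or_lt with rfl | ht
    · simp
    · nlinarith [hgb t]
  · rw [intervalIntegral.integral_symm, intervalIntegral.integral_symm z]
    refine neg_le_neg (intervalIntegral.integral_mono_on hz (hlin.intervalIntegrable _ _)
      (hg.intervalIntegrable _ _) fun t ⟨_, ht⟩ => ?_)
    rcases ht.eq_or_lt with rfl | ht
    · simp
    · nlinarith [hgb t]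

section SumPrimitive

variable {ι : Type*} [Fintype ι]

theorem EuclideanSpace.hasFDerivAt_sum_apply {g : ι → ℝ → ℝ} {d x : EuclideanSpace ℝ ι}
    (hg : ∀ k, HasDerivAt (g k) (d k) (x k)) :
    HasFDerivAt (fun y : EuclideanSpace ℝ ι => ∑ k, g k (y k)) (innerSL ℝ d) x := by
  have hproj (k : ι) : HasFDerivAt (fun y : EuclideanSpace ℝ ι => y k)
      (EuclideanSpace.proj k : EuclideanSpace ℝ ι →L[ℝ] ℝ) x := by
    simpa using (EuclideanSpace.proj (𝕜 := ℝ) k).hasFDerivAt (x := x)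
  refine (HasFDerivAt.fun_sum fun k _ => (hg k).comp_hasFDerivAt x (hproj k)).congr_fderiv ?_
  ext y
  simp [PiLp.inner_apply, mul_comm]

noncomputable def sumPrimitive (f : ι → ℝ → ℝ) (x : EuclideanSpace ℝ ι) : ℝ :=
  ∑ k, ∫ t in (0 : ℝ)..x k, f k t

variable {f : ι → ℝ → ℝ} {G : EuclideanSpace ℝ ι → EuclideanSpace ℝ ι}

theorem hasFDerivAt_sumPrimitive (hf : ∀ k, Continuous (f k)) (hG : ∀ x k, G x k = f k (x k))
    (x : EuclideanSpace ℝ ι) : HasFDerivAt (sumPrimitive f) (innerSL ℝ (G x)) x :=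
  EuclideanSpace.hasFDerivAt_sum_apply (g := fun k z => ∫ t in (0 : ℝ)..z, f k t) fun k => by
    simpa only [hG] using ((hf k).integral_hasStrictDerivAt 0 (x k)).hasDerivAt

theorem sumPrimitive_le (hf : ∀ k, Continuous (f k)) (hG : ∀ x k, G x k = f k (x k)) {b : ℝ}
    (hfb : ∀ k t, (f k t - f k 0) * t ≤ b * t ^ 2) (x : EuclideanSpace ℝ ι) :
    sumPrimitive f x ≤ ⟪G 0, x⟫_ℝ + b / 2 * ‖x‖ ^ 2 := by
  calc sumPrimitive f x ≤ ∑ k, (f k 0 * x k + b * x k ^ 2 / 2) :=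
        Finset.sum_le_sum fun k _ => intervalIntegral_le_of_sub_mul_le (hf k) (hfb k) (x k)
    _ = ⟪G 0, x⟫_ℝ + b / 2 * ‖x‖ ^ 2 := by
        simp only [EuclideanSpace.norm_sq_eq, PiLp.inner_apply, hG, Finset.sum_add_distrib,
          Finset.mul_sum, Real.norm_eq_abs, sq_abs, RCLike.inner_apply, conj_trivial,
          PiLp.zero_apply]
        congr 1 <;> exact Finset.sum_congr rfl fun k _ => by ring

theorem inner_sub_le_of_sub_mul_le (hG : ∀ x k, G x k = f k (x k)) {b : ℝ}
    (hfb : ∀ k s t, (f k s - f k t) * (s - t) ≤ b * (s - t) ^ 2) (x y : EuclideanSpace ℝ ι) :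
    ⟪x - y, G x - G y⟫_ℝ ≤ b * ‖x - y‖ ^ 2 := by
  simp only [EuclideanSpace.norm_sq_eq, PiLp.inner_apply, Finset.mul_sum, Real.norm_eq_abs,
    sq_abs, RCLike.inner_apply, conj_trivial, PiLp.sub_apply, hG]
  exact Finset.sum_le_sum fun k _ => by linarith [hfb k (x k) (y k)]

end SumPrimitive

theorem tendsto_cocompact_atTop_of_quadratic_le {E : Type*} [NormedAddCommGroup E]
    [ProperSpace E] {f : E → ℝ} {a c d : ℝ} (ha : 0 < a)
    (hf : ∀ x, a * ‖x‖ ^ 2 - c * ‖x‖ - d ≤ f x) : Tendsto f (cocompact E) atTop := by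
  have hquad : Tendsto (fun r : ℝ => (a * r - c) * r - d) atTop atTop :=
    tendsto_atTop_add_const_right _ _ <| Tendsto.atTop_mul_atTop₀
      (tendsto_atTop_add_const_right _ _ (tendsto_id.const_mul_atTop ha)) tendsto_id
  refine tendsto_atTop_mono (fun x => ?_) (hquad.comp tendsto_norm_cocompact_atTop)
  simp only [Function.comp_apply]
  linarith [hf x]

section Operator

variable {E : Type*} [NormedAddCommGroup E] [InnerProductSpace ℝ E] {T : E →L[ℝ] E}
  {G : E → E} {l b lam : ℝ}

theorem eq_of_apply_eq_smul_of_inner_sub_le (hT : ∀ v, l * ‖v‖ ^ 2 ≤ ⟪v, T v⟫_ℝ)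
    (hG : ∀ x y, ⟪x - y, G x - G y⟫_ℝ ≤ b * ‖x - y‖ ^ 2) (hlam : 0 ≤ lam) (hlb : lam * b < l)
    {x y : E} (hx : T x = lam • G x) (hy : T y = lam • G y) : x = y := by
  have hTxy : ⟪x - y, T (x - y)⟫_ℝ = lam * ⟪x - y, G x - G y⟫_ℝ := by
    rw [map_sub, hx, hy, ← smul_sub, real_inner_smul_right]
  have hle : l * ‖x - y‖ ^ 2 ≤ lam * b * ‖x - y‖ ^ 2 := by
    calc l * ‖x - y‖ ^ 2 ≤ ⟪x - y, T (x - y)⟫_ℝ := hT _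
      _ ≤ lam * (b * ‖x - y‖ ^ 2) := hTxy ▸ mul_le_mul_of_nonneg_left (hG x y) hlam
      _ = lam * b * ‖x - y‖ ^ 2 := by ring
  have hsq : ‖x - y‖ ^ 2 = 0 := by nlinarith [sq_nonneg ‖x - y‖]
  simpa [sub_eq_zero] using hsq

theorem exists_apply_eq_smul_of_hasFDerivAt [FiniteDimensional ℝ E]
    (hTsymm : (T : E →ₗ[ℝ] E).IsSymmetric) (hT : ∀ v, l * ‖v‖ ^ 2 ≤ ⟪v, T v⟫_ℝ)
    {Φ : E → ℝ} (hΦ : ∀ x, HasFDerivAt Φ (innerSL ℝ (G x)) x) {c d : ℝ}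
    (hΦle : ∀ x, Φ x ≤ c + d * ‖x‖ + b / 2 * ‖x‖ ^ 2) (hlam : 0 ≤ lam) (hlb : lam * b < l) :
    ∃ x, T x = lam • G x := by
  let F x := 2⁻¹ * T.reApplyInnerSelf x - lam * Φ x
  have hF (x : E) : HasFDerivAt F (innerSL ℝ (T x - lam • G x)) x := by
    refine (((hTsymm.hasStrictFDerivAt_reApplyInnerSelf x).hasFDerivAt.const_mul 2⁻¹).sub
      ((hΦ x).const_mul lam)).congr_fderiv ?_
    ext v
    simp
  have hFle (x : E) : (l - lam * b) / 2 * ‖x‖ ^ 2 - lam * d * ‖x‖ - lam * c ≤ F x := by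
    have hTx : T.reApplyInnerSelf x = ⟪x, T x⟫_ℝ := by
      simp [ContinuousLinearMap.reApplyInnerSelf_apply, real_inner_comm]
    have := mul_le_mul_of_nonneg_left (hΦle x) hlam
    simp only [F, hTx]
    nlinarith [hT x]
  have hFcont : Continuous F := continuous_iff_continuousAt.2 fun x => (hF x).continuousAt
  obtain ⟨x₀, hx₀⟩ :=
    hFcont.exists_forall_le (tendsto_cocompact_atTop_of_quadratic_le (by linarith) hFle)
  have hzero := IsLocalMin.hasFDerivAt_eq_zero (Eventually.of_forall hx₀) (hF x₀)
  refine ⟨x₀, sub_eq_zero.mp ?_⟩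
  exact inner_self_eq_zero.mp <| by
    simpa only [innerSL_apply_apply, zero_apply] using
      DFunLike.congr_fun hzero (T x₀ - lam • G x₀)

end Operator

theorem stmt7_general (n : ℕ) (M : Type*) [MetricSpace M]
    (A : Matrix (Fin n) (Fin n) ℝ) (hApd : A.PosDef)
    (l1 : ℝ) (hl1 : l1 = ⨅ i, hApd.1.eigenvalues i)
    (hs : Fin n → ℝ → M → ℝ)
    (hcont : ∀ k, Continuous fun p : ℝ × M => hs k p.1 p.2)
    (h : EuclideanSpace ℝ (Fin n) → M → EuclideanSpace ℝ (Fin n))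
    (hdef : ∀ x u k, h x u k = hs k (x k) u)
    (b : ℝ) (hb : 0 < b)
    (hA4 : ∀ (k : Fin n) (z₁ z₂ : ℝ) (v : M),
      (hs k z₁ v - hs k z₂ v) * (z₁ - z₂) ≤ b * |z₁ - z₂| ^ 2)
    (h0 : ∀ u : M, h 0 u ≠ 0)
    (u : M) (lam : ℝ) (hlam0 : 0 < lam) (hlam : lam < l1 / b) :
    (∃! x : EuclideanSpace ℝ (Fin n),
        Matrix.toEuclideanCLM (𝕜 := ℝ) A x = lam • h x u)
    ∧ ∀ x : EuclideanSpace ℝ (Fin n),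
        Matrix.toEuclideanCLM (𝕜 := ℝ) A x = lam • h x u → x ≠ 0 := by
  have hlb : lam * b < l1 := (lt_div_iff₀ hb).mp hlam
  have hT (v : EuclideanSpace ℝ (Fin n)) :
      l1 * ‖v‖ ^ 2 ≤ ⟪v, Matrix.toEuclideanCLM (𝕜 := ℝ) A v⟫_ℝ :=
    hApd.1.mul_norm_sq_le_inner (fun i => hl1 ▸ ciInf_le (Finite.bddBelow_range _) i) v
  have hcu (k : Fin n) : Continuous fun z => hs k z u := (hcont k).comp (.prodMk_left u)
  have hG (x : EuclideanSpace ℝ (Fin n)) (k : Fin n) : h x u k = hs k (x k) u := hdef x u k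
  have hfb (k : Fin n) (s t : ℝ) : (hs k s u - hs k t u) * (s - t) ≤ b * (s - t) ^ 2 := by
    simpa only [sq_abs] using hA4 k s t u
  have hmono := inner_sub_le_of_sub_mul_le (f := fun k z => hs k z u) hG hfb
  have hΦle (x : EuclideanSpace ℝ (Fin n)) :
      sumPrimitive (fun k z => hs k z u) x ≤ 0 + ‖h 0 u‖ * ‖x‖ + b / 2 * ‖x‖ ^ 2 := by
    have := sumPrimitive_le hcu hG (fun k t => by simpa using hfb k t 0) x
    linarith [real_inner_le_norm (h 0 u) x]
  obtain ⟨x₀, hx₀⟩ := exists_apply_eq_smul_of_hasFDerivAt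
    (Matrix.isSymmetric_toEuclideanLin_iff.mpr hApd.1) hT (hasFDerivAt_sumPrimitive hcu hG) hΦle
    hlam0.le hlb
  refine ⟨⟨x₀, hx₀, fun y hy =>
    eq_of_apply_eq_smul_of_inner_sub_le hT hmono hlam0.le hlb hy hx₀⟩, ?_⟩
  rintro x hx rfl
  exact h0 u (by simpa [hlam0.ne'] using hx.symm)

theorem stmt7 (n : ℕ) (hn : 0 < n) (M : Type*) [MetricSpace M]
    (A : Matrix (Fin n) (Fin n) ℝ) (hApd : A.PosDef)
    (l1 : ℝ) (hl1 : l1 = ⨅ i, hApd.1.eigenvalues i) (hl1pos : 0 < l1)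
    (hs : Fin n → ℝ → M → ℝ)
    (hcont : ∀ k, Continuous fun p : ℝ × M => hs k p.1 p.2)
    (h : EuclideanSpace ℝ (Fin n) → M → EuclideanSpace ℝ (Fin n))
    (hdef : ∀ x u k, h x u k = hs k (x k) u)
    (b : ℝ) (hb : 0 < b)
    (hA4 : ∀ (k : Fin n) (z₁ z₂ : ℝ) (v : M),
      (hs k z₁ v - hs k z₂ v) * (z₁ - z₂) ≤ b * |z₁ - z₂| ^ 2)
    (h0 : ∀ u : M, h 0 u ≠ 0)
    (u : M) (lam : ℝ) (hlam0 : 0 < lam) (hlam : lam < l1 / b) :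
    (∃! x : EuclideanSpace ℝ (Fin n),
        Matrix.toEuclideanCLM (𝕜 := ℝ) A x = lam • h x u)
    ∧ ∀ x : EuclideanSpace ℝ (Fin n),
        Matrix.toEuclideanCLM (𝕜 := ℝ) A x = lam • h x u → x ≠ 0 :=
  stmt7_general n M A hApd l1 hl1 hs hcont h hdef b hb hA4 h0 u lam hlam0 hlam
end

section
/- Let A be a positive definite real symmetric n×n matrix with smallest eigenvalue λ₁, M a metric space, h : ℝⁿ × M → ℝⁿ continuous and componentwise in x, satisfying (A3): ⟨h(z,v),z⟩ ≤ ν|z|^μ for |z| ≥ θ₁ with μ < 2, ν, θ₁ > 0; (A4): (hₖ(z₁,v)-hₖ(z₂,v))(z₁-z₂) ≤ b|z₁-z₂|² with b > 0; and h(0,u) ≠ 0 for all u. Fix λ ∈ (0, λ₁/b). If uₖ → ū in M and xₖ are the unique solutions of A xₖ = λ h(xₖ, uₖ), then (xₖ) has a convergent subsequence whose limit x̄ satisfies A x̄ = λ h(x̄, ū). -/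
/-!
Positive definiteness of `A` and compactness of the unit sphere give `c > 0` with
`c ‖z‖² ≤ ⟪A z, z⟫`. Pairing `A xₖ = λ h(xₖ, uₖ)` with `xₖ` and using (A3) yields
`c ‖xₖ‖² ≤ λ ν ‖xₖ‖^μ` whenever `‖xₖ‖ ≥ θ₁`, and since `μ < 2` this bounds `(xₖ)`.
Bolzano–Weierstrass extracts a convergent subsequence, and the equation passes to the limit
by joint continuity of `h`.
-/

open scoped InnerProductSpace
open Filter Topology

lemma Real.le_rpow_inv_of_mul_sq_le_mul_rpow {c K μ t : ℝ} (hc : 0 < c) (hμ : μ < 2)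
    (ht : 0 < t) (h : c * t ^ 2 ≤ K * t ^ μ) : t ≤ (K / c) ^ (2 - μ)⁻¹ := by
  have htμ : 0 < t ^ μ := Real.rpow_pos_of_pos ht μ
  have hsplit : t ^ (2 : ℕ) = t ^ (2 - μ) * t ^ μ := by
    rw [← Real.rpow_add ht, sub_add_cancel, ← Real.rpow_natCast]; norm_num
  have hpow : t ^ (2 - μ) ≤ K / c := by
    rw [le_div_iff₀ hc]
    nlinarith [hsplit]
  exact (Real.le_rpow_inv_iff_of_pos ht.le ((Real.rpow_nonneg ht.le _).trans hpow)
    (by linarith)).2 hpow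

section

variable {E : Type*} [NormedAddCommGroup E] [InnerProductSpace ℝ E]

lemma norm_le_of_coercive_of_inner_le {c lam ν μ θ : ℝ} (hc : 0 < c) (hμ : μ < 2)
    (hθ : 0 < θ) (hlam : 0 ≤ lam) {z w : E} (hz : c * ‖z‖ ^ 2 ≤ lam * ⟪w, z⟫_ℝ)
    (hw : θ ≤ ‖z‖ → ⟪w, z⟫_ℝ ≤ ν * ‖z‖ ^ μ) :
    ‖z‖ ≤ max θ ((lam * ν / c) ^ (2 - μ)⁻¹) := by
  rcases le_or_gt ‖z‖ θ with hle | hgt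
  · exact le_max_of_le_left hle
  · refine le_max_of_le_right (Real.le_rpow_inv_of_mul_sq_le_mul_rpow hc hμ (hθ.trans hgt) ?_)
    calc c * ‖z‖ ^ 2 ≤ lam * ⟪w, z⟫_ℝ := hz
      _ ≤ lam * (ν * ‖z‖ ^ μ) := mul_le_mul_of_nonneg_left (hw hgt.le) hlam
      _ = lam * ν * ‖z‖ ^ μ := by ring

lemma ContinuousLinearMap.exists_pos_mul_sq_le_inner_self [FiniteDimensional ℝ E]
    (T : E →L[ℝ] E) (hT : ∀ z, z ≠ 0 → 0 < ⟪T z, z⟫_ℝ) :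
    ∃ c > 0, ∀ z, c * ‖z‖ ^ 2 ≤ ⟪T z, z⟫_ℝ := by
  rcases subsingleton_or_nontrivial E with _ | _
  · exact ⟨1, one_pos, fun z => by simp [Subsingleton.elim z 0]⟩
  obtain ⟨z₀, hz₀, hmin⟩ := (isCompact_sphere (0 : E) 1).exists_isMinOn
    (NormedSpace.sphere_nonempty.2 zero_le_one)
    (T.continuous.inner (𝕜 := ℝ) continuous_id).continuousOn
  have hz₀' : z₀ ≠ 0 := ne_zero_of_mem_unit_sphere ⟨z₀, hz₀⟩
  refine ⟨⟪T z₀, z₀⟫_ℝ, hT z₀ hz₀', fun z => ?_⟩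
  rcases eq_or_ne z 0 with rfl | hz
  · simp
  have hr : 0 < ‖z‖ := norm_pos_iff.2 hz
  have hunit : ‖z‖⁻¹ • z ∈ Metric.sphere (0 : E) 1 := by
    simp [norm_smul, hr.ne']
  have hscale : ⟪T (‖z‖⁻¹ • z), ‖z‖⁻¹ • z⟫_ℝ * ‖z‖ ^ 2 = ⟪T z, z⟫_ℝ := by
    rw [map_smul, real_inner_smul_left, real_inner_smul_right]
    field_simp
  rw [← hscale]
  exact mul_le_mul_of_nonneg_right (hmin hunit) (sq_nonneg _)

end

lemma Matrix.PosDef.inner_toEuclideanCLM_self_pos {n : Type*} [Fintype n] [DecidableEq n]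
    {A : Matrix n n ℝ} (hA : A.PosDef) {z : EuclideanSpace ℝ n} (hz : z ≠ 0) :
    0 < ⟪Matrix.toEuclideanCLM (𝕜 := ℝ) A z, z⟫_ℝ := by
  have hd := hA.re_dotProduct_pos (x := WithLp.ofLp z) (by simpa using hz)
  rw [EuclideanSpace.inner_eq_star_dotProduct]
  simpa [Matrix.ofLp_toEuclideanCLM, Matrix.toLin'_apply] using hd

lemma EuclideanSpace.continuous_uncurry_of_components {ι M : Type*} [TopologicalSpace M]
    {g : ι → ℝ → M → ℝ} (hg : ∀ k, Continuous fun p : ℝ × M => g k p.1 p.2)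
    {H : EuclideanSpace ℝ ι → M → EuclideanSpace ℝ ι} (hH : ∀ x u k, H x u k = g k (x k) u) :
    Continuous fun p : EuclideanSpace ℝ ι × M => H p.1 p.2 := by
  have hH' : (fun p : EuclideanSpace ℝ ι × M => H p.1 p.2)
      = fun p => WithLp.toLp 2 fun k => g k (p.1 k) p.2 := by
    funext p; ext k; simp [hH]
  rw [hH']
  exact (PiLp.continuous_toLp 2 _).comp <| continuous_pi fun k =>
    (hg k).comp (by fun_prop : Continuous fun p : EuclideanSpace ℝ ι × M => (p.1 k, p.2))

theorem exists_subseq_tendsto_of_apply_eq_smul {E M : Type*} [NormedAddCommGroup E]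
    [InnerProductSpace ℝ E] [ProperSpace E] [TopologicalSpace M]
    {T : E →L[ℝ] E} {c : ℝ} (hc : 0 < c) (hT : ∀ z, c * ‖z‖ ^ 2 ≤ ⟪T z, z⟫_ℝ)
    {H : E → M → E} (hH : Continuous fun p : E × M => H p.1 p.2)
    {μ ν θ : ℝ} (hμ : μ < 2) (hθ : 0 < θ)
    (hgrowth : ∀ z v, θ ≤ ‖z‖ → ⟪H z v, z⟫_ℝ ≤ ν * ‖z‖ ^ μ)
    {lam : ℝ} (hlam : 0 ≤ lam) {u : ℕ → M} {ub : M} (hu : Tendsto u atTop (𝓝 ub))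
    {x : ℕ → E} (hx : ∀ k, T (x k) = lam • H (x k) (u k)) :
    ∃ (φ : ℕ → ℕ) (xb : E), StrictMono φ ∧ Tendsto (x ∘ φ) atTop (𝓝 xb) ∧
      T xb = lam • H xb ub := by
  have hbound : ∀ k, x k ∈ Metric.closedBall 0 (max θ ((lam * ν / c) ^ (2 - μ)⁻¹)) := by
    intro k
    rw [mem_closedBall_zero_iff]
    refine norm_le_of_coercive_of_inner_le hc hμ hθ hlam ?_ (hgrowth (x k) (u k))
    simpa only [hx k, real_inner_smul_left] using hT (x k)
  obtain ⟨xb, -, φ, hφ, hconv⟩ := tendsto_subseq_of_bounded Metric.isBounded_closedBall hbound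
  refine ⟨φ, xb, hφ, hconv, tendsto_nhds_unique (T.continuous.tendsto xb |>.comp hconv) ?_⟩
  have hlim : Tendsto (fun k => lam • H (x (φ k)) (u (φ k))) atTop (𝓝 (lam • H xb ub)) :=
    ((hH.tendsto (xb, ub)).comp (hconv.prodMk_nhds (hu.comp hφ.tendsto_atTop))).const_smul lam
  simpa only [Function.comp_def, hx] using hlim

theorem stmt9_general (n : ℕ) (M : Type*) [MetricSpace M]
    (A : Matrix (Fin n) (Fin n) ℝ) (hApd : A.PosDef)
    (hs : Fin n → ℝ → M → ℝ)
    (hcont : ∀ k, Continuous fun p : ℝ × M => hs k p.1 p.2)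
    (h : EuclideanSpace ℝ (Fin n) → M → EuclideanSpace ℝ (Fin n))
    (hdef : ∀ x u k, h x u k = hs k (x k) u)
    (μ ν θ₁ : ℝ) (hμ : μ < 2) (hθ₁ : 0 < θ₁)
    (hA3 : ∀ (z : EuclideanSpace ℝ (Fin n)) (v : M), θ₁ ≤ ‖z‖ →
      ⟪h z v, z⟫_ℝ ≤ ν * ‖z‖ ^ μ)
    (lam : ℝ) (hlam0 : 0 < lam)
    (u : ℕ → M) (ub : M) (hu : Tendsto u atTop (𝓝 ub))
    (x : ℕ → EuclideanSpace ℝ (Fin n))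
    (hx : ∀ k, Matrix.toEuclideanCLM (𝕜 := ℝ) A (x k) = lam • h (x k) (u k)) :
    ∃ (φ : ℕ → ℕ) (xb : EuclideanSpace ℝ (Fin n)), StrictMono φ ∧
      Tendsto (x ∘ φ) atTop (𝓝 xb) ∧
      Matrix.toEuclideanCLM (𝕜 := ℝ) A xb = lam • h xb ub := by
  obtain ⟨c, hc, hcoer⟩ := (Matrix.toEuclideanCLM (𝕜 := ℝ) A).exists_pos_mul_sq_le_inner_self
    fun _ hz => hApd.inner_toEuclideanCLM_self_pos hz
  exact exists_subseq_tendsto_of_apply_eq_smul hc hcoer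
    (EuclideanSpace.continuous_uncurry_of_components hcont hdef) hμ hθ₁ hA3 hlam0.le hu hx

theorem stmt9 (n : ℕ) (hn : 0 < n) (M : Type*) [MetricSpace M]
    (A : Matrix (Fin n) (Fin n) ℝ) (hApd : A.PosDef)
    (l1 : ℝ) (hl1 : l1 = ⨅ i, hApd.1.eigenvalues i) (hl1pos : 0 < l1)
    (hs : Fin n → ℝ → M → ℝ)
    (hcont : ∀ k, Continuous fun p : ℝ × M => hs k p.1 p.2)
    (h : EuclideanSpace ℝ (Fin n) → M → EuclideanSpace ℝ (Fin n))
    (hdef : ∀ x u k, h x u k = hs k (x k) u)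
    (μ ν θ₁ : ℝ) (hμ : μ < 2) (hν : 0 < ν) (hθ₁ : 0 < θ₁)
    (hA3 : ∀ (z : EuclideanSpace ℝ (Fin n)) (v : M), θ₁ ≤ ‖z‖ →
      ⟪h z v, z⟫_ℝ ≤ ν * ‖z‖ ^ μ)
    (b : ℝ) (hb : 0 < b)
    (hA4 : ∀ (k : Fin n) (z₁ z₂ : ℝ) (v : M),
      (hs k z₁ v - hs k z₂ v) * (z₁ - z₂) ≤ b * |z₁ - z₂| ^ 2)
    (h0 : ∀ u : M, h 0 u ≠ 0)
    (lam : ℝ) (hlam0 : 0 < lam) (hlam : lam < l1 / b)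
    (u : ℕ → M) (ub : M) (hu : Tendsto u atTop (𝓝 ub))
    (x : ℕ → EuclideanSpace ℝ (Fin n))
    (hx : ∀ k, Matrix.toEuclideanCLM (𝕜 := ℝ) A (x k) = lam • h (x k) (u k)) :
    ∃ (φ : ℕ → ℕ) (xb : EuclideanSpace ℝ (Fin n)), StrictMono φ ∧
      Tendsto (x ∘ φ) atTop (𝓝 xb) ∧
      Matrix.toEuclideanCLM (𝕜 := ℝ) A xb = lam • h xb ub :=
  stmt9_general n M A hApd hs hcont h hdef μ ν θ₁ hμ hθ₁ hA3 lam hlam0 u ub hu x hx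
end
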